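/- Let a = s_{i_1}⋯s_{i_r} be a reduced word for w ∈ S_n and P_x(a) = Σ_{σ: π(w^σ)=x} q^{|D(σ)|} the defect generating polynomial. Then Σ_{x ≤ w} q^{ℓ(x)} P_x(a) = (1+q)^{ℓ(w)}, where the sum is over all x below w in Bruhat order. Equivalently (since every mask produces some x ≤ w), Σ_{σ ∈ {0,1}^r} q^{ℓ(π(w^σ)) + |D(σ)|} = (1+q)^r. -/

import Mathlib

/-!
Appending a letter `s` to the word splits every mask into the mask that skips the new position and
the one that uses it. If `π s` is longer than the product `π` of the old mask, the new position is
a defect of neither, and the two weights `ℓ + |D|` are `m` and `m + 1`; if `π s` is shorter, it is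
a defect of both, and the weights are `m + 1` and `m`. Either way each letter multiplies the sum by
`1 + q`. For the first identity it remains to see that every mask product lies below `w` in the
subword order, i.e. that this order does not depend on the reduced word. Both agree with the order
generated by length-decreasing multiplication with transpositions: with `ℓ` counted by inversions,
the strong exchange property turns such a chain below `w` into a subword of every reduced word of
`w`, and the lifting property turns every subword of one reduced word into such a chain.
-/

open Polynomial

/-- The simple transposition `s_i = (i, i+1)` (1-based) in `S_n`, acting on `Fin n`
(0-based positions `i-1` and `i`); equals `1` if `i` is out of range. -/
def gen (n : ℕ) (i : ℕ) : Equiv.Perm (Fin n) :=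
  if h : 1 ≤ i ∧ i < n then Equiv.swap ⟨i - 1, by omega⟩ ⟨i, h.2⟩ else 1

/-- Product of the word `l` of generator indices. -/
def wordProd (n : ℕ) (l : List ℕ) : Equiv.Perm (Fin n) :=
  (l.map (gen n)).prod

/-- Coxeter length of `w ∈ S_n`. -/
noncomputable def len (n : ℕ) (w : Equiv.Perm (Fin n)) : ℕ :=
  sInf {r | ∃ l : List ℕ, (∀ i ∈ l, 1 ≤ i ∧ i < n) ∧ wordProd n l = w ∧ l.length = r}

/-- `l` is a reduced word for `w`. -/
def IsReducedWord (n : ℕ) (w : Equiv.Perm (Fin n)) (l : List ℕ) : Prop :=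
  (∀ i ∈ l, 1 ≤ i ∧ i < n) ∧ wordProd n l = w ∧ l.length = len n w

/-- Bruhat-Chevalley order: `x ≤ w` iff every reduced word for `w` contains a
subword whose product is `x`. -/
def Bruhat (n : ℕ) (x w : Equiv.Perm (Fin n)) : Prop :=
  ∀ l, IsReducedWord n w l → ∃ t, t.Sublist l ∧ wordProd n t = x

/-- `w` is 321-avoiding: no `i < j < k` with `w i > w j > w k`. -/
def Avoids321 (n : ℕ) (w : Equiv.Perm (Fin n)) : Prop :=
  ¬ ∃ i j k : Fin n, i < j ∧ j < k ∧ w j < w i ∧ w k < w j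

/-- Product of the subword of `l` selected by the mask `S` (set of selected positions). -/
def maskProd (n : ℕ) (l : List ℕ) (S : Finset ℕ) : Equiv.Perm (Fin n) :=
  wordProd n (((List.range l.length).filter (fun j => decide (j ∈ S))).map (fun j => l.getD j 0))

/-- Position `j` of the word `l` is a defect of the mask `S`. -/
noncomputable def IsDefect (n : ℕ) (l : List ℕ) (S : Finset ℕ) (j : ℕ) : Prop :=
  len n (maskProd n (l.take j) S * gen n (l.getD j 0)) < len n (maskProd n (l.take j) S)

/-- The defect set `D(σ)` of the mask `S` on the word `l`. -/
noncomputable def defectSet (n : ℕ) (l : List ℕ) (S : Finset ℕ) : Finset ℕ :=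
  (Finset.range l.length).filter (fun j =>
    len n (maskProd n (l.take j) S * gen n (l.getD j 0)) < len n (maskProd n (l.take j) S))

/-- Deodhar's defect generating polynomial `P_x(a) = Σ_{σ : π(w^σ) = x} q^{|D(σ)|}`. -/
noncomputable def defPoly (n : ℕ) (l : List ℕ) (x : Equiv.Perm (Fin n)) : Polynomial ℤ :=
  ∑ S ∈ (Finset.range l.length).powerset,
    if maskProd n l S = x then (X : Polynomial ℤ) ^ (defectSet n l S).card else 0

open Equiv Finset

section

variable {n : ℕ}

def ValidWord (n : ℕ) (l : List ℕ) : Prop := ∀ c ∈ l, 1 ≤ c ∧ c < n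

def inversions (w : Perm (Fin n)) : Finset (Fin n × Fin n) :=
  univ.filter fun x => x.1 < x.2 ∧ w x.2 < w x.1

theorem ValidWord.mono {l t : List ℕ} (hl : ValidWord n l) (ht : t.Sublist l) : ValidWord n t :=
  fun c hc => hl c (ht.subset hc)

theorem ValidWord.concat {l : List ℕ} {c : ℕ} (hl : ValidWord n l) (hc : 1 ≤ c ∧ c < n) :
    ValidWord n (l ++ [c]) := by
  intro d hd
  rcases List.mem_append.1 hd with hd | hd
  · exact hl d hd
  · rwa [List.mem_singleton.1 hd]

theorem wordProd_append (l₁ l₂ : List ℕ) :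
    wordProd n (l₁ ++ l₂) = wordProd n l₁ * wordProd n l₂ := by
  simp [wordProd]

theorem wordProd_cons (c : ℕ) (l : List ℕ) : wordProd n (c :: l) = gen n c * wordProd n l := by
  simp [wordProd]

theorem wordProd_concat (l : List ℕ) (c : ℕ) :
    wordProd n (l ++ [c]) = wordProd n l * gen n c := by
  simp [wordProd]

theorem gen_mul_self (c : ℕ) : gen n c * gen n c = 1 := by
  unfold gen
  split_ifs <;> simp

theorem mul_gen_mul_gen (w : Perm (Fin n)) (c : ℕ) : w * gen n c * gen n c = w := by
  rw [mul_assoc, gen_mul_self, mul_one]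

theorem gen_eq_swap_of_val_eq {p q : Fin n} (hpq : (q : ℕ) = p + 1) : gen n q = swap p q := by
  have hp : (⟨(q : ℕ) - 1, by omega⟩ : Fin n) = p := Fin.ext (by simp only; omega)
  rw [gen, dif_pos ⟨by omega, q.isLt⟩, hp]

theorem exists_gen_eq_swap {c : ℕ} (hc : 1 ≤ c ∧ c < n) :
    ∃ p q : Fin n, (q : ℕ) = p + 1 ∧ gen n c = swap p q :=
  ⟨⟨c - 1, by omega⟩, ⟨c, hc.2⟩, (Nat.sub_add_cancel hc.1).symm,
    by rw [gen, dif_pos hc]⟩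

theorem swap_apply_lt_swap_apply {p q a b : Fin n} (hpq : (q : ℕ) = p + 1) (hab : a < b)
    (hne : ¬(a = p ∧ b = q)) : swap p q a < swap p q b := by
  rw [Fin.lt_def] at hab ⊢
  simp only [swap_apply_def]
  split_ifs <;> simp_all [Fin.ext_iff] <;> omega

theorem mem_inversions {w : Perm (Fin n)} {x : Fin n × Fin n} :
    x ∈ inversions w ↔ x.1 < x.2 ∧ w x.2 < w x.1 := by
  simp [inversions]

theorem inversions_one : inversions (1 : Perm (Fin n)) = ∅ :=
  filter_eq_empty_iff.2 fun _ _ h => lt_asymm h.1 h.2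

theorem inversions_mul_swap_of_lt {p q : Fin n} (hpq : (q : ℕ) = p + 1) {w : Perm (Fin n)}
    (hw : w p < w q) :
    inversions (w * swap p q) =
      insert (p, q) ((inversions w).map (prodCongr (swap p q) (swap p q)).toEmbedding) := by
  have hlt : p < q := by rw [Fin.lt_def]; omega
  ext ⟨a, b⟩
  simp only [mem_inversions, mem_insert, mem_map_equiv, Prod.mk.injEq, prodCongr_symm, symm_swap,
    prodCongr_apply, Prod.map, Perm.mul_apply]
  by_cases hpq' : a = p ∧ b = q
  · obtain ⟨rfl, rfl⟩ := hpq'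
    simp [hw, hlt]
  by_cases hqp : a = q ∧ b = p
  · obtain ⟨rfl, rfl⟩ := hqp
    simp [hw.not_gt, hlt.ne']
  have hiff : a < b ↔ swap p q a < swap p q b := by
    refine ⟨fun h => swap_apply_lt_swap_apply hpq h hpq', fun h => ?_⟩
    have := swap_apply_lt_swap_apply hpq h (by simpa [swap_apply_eq_iff] using hqp)
    simpa using this
  simp [hpq', hiff]

theorem card_inversions_mul_swap_of_lt {p q : Fin n} (hpq : (q : ℕ) = p + 1) {w : Perm (Fin n)}
    (hw : w p < w q) : #(inversions (w * swap p q)) = #(inversions w) + 1 := by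
  have hqp : ¬q < p := by rw [Fin.lt_def]; omega
  rw [inversions_mul_swap_of_lt hpq hw, card_insert_of_notMem, card_map]
  simp [mem_inversions, hqp]

theorem card_inversions_mul_swap_of_gt {p q : Fin n} (hpq : (q : ℕ) = p + 1) {w : Perm (Fin n)}
    (hw : w q < w p) : #(inversions (w * swap p q)) + 1 = #(inversions w) := by
  have hw' : (w * swap p q) p < (w * swap p q) q := by simpa using hw
  simpa [mul_assoc] using (card_inversions_mul_swap_of_lt hpq hw').symm

theorem card_inversions_mul_swap {p q : Fin n} (hpq : (q : ℕ) = p + 1) (w : Perm (Fin n)) :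
    #(inversions (w * swap p q)) = #(inversions w) + 1 ∨
      #(inversions (w * swap p q)) + 1 = #(inversions w) := by
  have hne : w p ≠ w q := w.injective.ne (by rw [Ne, Fin.ext_iff]; omega)
  rcases hne.lt_or_gt with h | h
  · exact Or.inl (card_inversions_mul_swap_of_lt hpq h)
  · exact Or.inr (card_inversions_mul_swap_of_gt hpq h)

theorem card_inversions_wordProd_le {l : List ℕ} (hl : ValidWord n l) :
    #(inversions (wordProd n l)) ≤ l.length := by
  induction l using List.reverseRecOn with
  | nil => simp [wordProd, inversions_one]
  | append_singleton l c ih =>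
    obtain ⟨p, q, hpq, hgen⟩ := exists_gen_eq_swap (hl c (by simp))
    have := ih (hl.mono (List.sublist_append_left l [c]))
    rw [wordProd_concat, hgen, List.length_append, List.length_singleton]
    rcases card_inversions_mul_swap hpq (wordProd n l) with h | h <;> omega

theorem exists_adjacent_descent {w : Perm (Fin n)} (hw : w ≠ 1) :
    ∃ p q : Fin n, (q : ℕ) = p + 1 ∧ w q < w p := by
  by_contra! h
  refine hw (Equiv.ext fun i => ?_)
  suffices StrictMono w from this.apply_eq
  cases n with
  | zero => exact fun a => a.elim0
  | succ m =>
    exact Fin.strictMono_iff_lt_succ.2 fun i => (h _ _ (by simp)).lt_of_ne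
      (w.injective.ne (Fin.castSucc_lt_succ (i := i)).ne)

theorem exists_validWord_length_eq_card_inversions (w : Perm (Fin n)) :
    ∃ l, ValidWord n l ∧ wordProd n l = w ∧ l.length = #(inversions w) := by
  induction h : #(inversions w) using Nat.strong_induction_on generalizing w with
  | _ m ih =>
    by_cases hw : w = 1
    · subst hw
      exact ⟨[], by simp [ValidWord], rfl, by simp [← h, inversions_one]⟩
    obtain ⟨p, q, hpq, hdesc⟩ := exists_adjacent_descent hw
    have hcard := card_inversions_mul_swap_of_gt hpq hdesc
    obtain ⟨l, hl, hprod, hlen⟩ := ih _ (by omega) (w * swap p q) rfl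
    refine ⟨l ++ [(q : ℕ)], hl.concat ⟨by omega, q.isLt⟩, ?_,
      by rw [List.length_append, List.length_singleton]; omega⟩
    rw [wordProd_concat, hprod, gen_eq_swap_of_val_eq hpq, mul_assoc, swap_mul_self, mul_one]

theorem len_wordProd_le {l : List ℕ} (hl : ValidWord n l) : len n (wordProd n l) ≤ l.length :=
  Nat.sInf_le ⟨l, hl, rfl, rfl⟩

theorem len_one : len n 1 = 0 :=
  Nat.le_zero.1 (len_wordProd_le (l := []) (by simp [ValidWord]))

theorem len_eq_card_inversions (w : Perm (Fin n)) : len n w = #(inversions w) := by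
  obtain ⟨l, hl, rfl, hlen⟩ := exists_validWord_length_eq_card_inversions w
  refine le_antisymm (hlen ▸ len_wordProd_le hl) (le_csInf ⟨_, l, hl, rfl, rfl⟩ ?_)
  rintro _ ⟨m, hm, hprod, rfl⟩
  exact hprod ▸ card_inversions_wordProd_le hm

theorem len_mul_gen {c : ℕ} (hc : 1 ≤ c ∧ c < n) (w : Perm (Fin n)) :
    len n (w * gen n c) = len n w + 1 ∨ len n (w * gen n c) + 1 = len n w := by
  obtain ⟨p, q, hpq, hgen⟩ := exists_gen_eq_swap hc
  simpa only [len_eq_card_inversions, hgen] using card_inversions_mul_swap hpq w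

theorem exists_isReducedWord (w : Perm (Fin n)) : ∃ l, IsReducedWord n w l := by
  obtain ⟨l, hl, hprod, hlen⟩ := exists_validWord_length_eq_card_inversions w
  exact ⟨l, hl, hprod, by rw [hlen, len_eq_card_inversions]⟩

theorem card_inversions_le_mul_swap {a b : Fin n} (hab : a < b) {w : Perm (Fin n)}
    (hw : w a < w b) : #(inversions w) ≤ #(inversions (w * swap a b)) := by
  obtain ⟨d, h⟩ : ∃ d, (b : ℕ) - a = d := ⟨_, rfl⟩
  induction d using Nat.strong_induction_on generalizing a w with
  | _ d ih =>
    have hab' : (a : ℕ) < b := hab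
    by_cases hb : (b : ℕ) = a + 1
    · rw [card_inversions_mul_swap_of_lt hb hw]
      omega
    set a' : Fin n := ⟨a + 1, by omega⟩
    have haa' : (a' : ℕ) = a + 1 := rfl
    have ha'b : a' < b := by rw [Fin.lt_def]; omega
    have hb : b ≠ a' := ha'b.ne'
    have hne : a ≠ a' := by rw [Ne, Fin.ext_iff]; omega
    -- move the left position one step towards `b`
    have hu : (w * swap a a') a' < (w * swap a a') b := by
      rwa [Perm.mul_apply, Perm.mul_apply, swap_apply_right,
        swap_apply_of_ne_of_ne hab.ne' hb]
    have hIH := ih _ (by omega) ha'b hu rfl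
    have hconj : w * swap a a' * swap a' b = w * swap a b * swap a a' := by
      have := swap_apply_apply (swap a a') a' b
      rw [swap_apply_right, swap_apply_of_ne_of_ne hab.ne' hb, swap_inv] at this
      rw [this, mul_assoc, mul_assoc, mul_assoc, swap_mul_self, mul_one]
    rw [hconj] at hIH
    rcases (w.injective.ne hne).lt_or_gt with hasc | hdesc
    · have := card_inversions_mul_swap_of_lt haa' hasc
      rcases card_inversions_mul_swap haa' (w * swap a b) with h' | h' <;> omega
    · have hW : (w * swap a b) a' < (w * swap a b) a := by
        rw [Perm.mul_apply, Perm.mul_apply, swap_apply_left,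
          swap_apply_of_ne_of_ne hne.symm (Fin.ne_of_lt ha'b)]
        exact hdesc.trans hw
      have := card_inversions_mul_swap_of_gt haa' hdesc
      have := card_inversions_mul_swap_of_gt haa' hW
      omega

theorem apply_lt_apply_of_len_mul_swap_lt {a b : Fin n} (hab : a < b) {w : Perm (Fin n)}
    (h : len n (w * swap a b) < len n w) : w b < w a := by
  rw [len_eq_card_inversions, len_eq_card_inversions] at h
  by_contra hle
  have hlt : w a < w b := (not_lt.1 hle).lt_of_ne (w.injective.ne hab.ne)
  exact h.not_ge (card_inversions_le_mul_swap hab hlt)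

/-- The strong exchange property. -/
theorem exists_wordProd_eraseIdx_eq_mul_swap_of_lt {l : List ℕ} (hl : ValidWord n l) {a b : Fin n}
    (hab : a < b) (h : wordProd n l b < wordProd n l a) :
    ∃ k < l.length, wordProd n (l.eraseIdx k) = wordProd n l * swap a b := by
  -- the suffix at which `a` and `b` change order carries the transposition
  obtain ⟨k, hflip, hkeep⟩ := Nat.exists_not_and_succ_of_not_zero_of_exists
    (p := fun k => wordProd n (l.drop k) a < wordProd n (l.drop k) b)
    (by simpa using h.not_gt) ⟨l.length, by simpa [wordProd] using hab⟩
  have hk : k < l.length := by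
    by_contra! hk
    exact hflip (by simpa [List.drop_eq_nil_of_le hk, wordProd] using hab)
  set u := wordProd n (l.drop (k + 1))
  obtain ⟨p, q, hpq, hgen⟩ := exists_gen_eq_swap (hl _ (List.getElem_mem hk))
  have hdrop : wordProd n (l.drop k) = gen n l[k] * u := by
    rw [List.drop_eq_getElem_cons hk, wordProd_cons]
  have hpos : u a = p ∧ u b = q := by
    by_contra hne
    rw [hdrop, hgen] at hflip
    exact hflip (swap_apply_lt_swap_apply hpq hkeep hne)
  have hconj : u * swap a b = gen n l[k] * u := by
    rw [hgen, ← hpos.1, ← hpos.2, swap_apply_apply, inv_mul_cancel_right]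
  refine ⟨k, hk, ?_⟩
  conv_rhs => rw [← List.take_append_drop k l, wordProd_append, hdrop, mul_assoc, mul_assoc,
    hconj, ← mul_assoc (gen n l[k]), gen_mul_self, one_mul]
  rw [List.eraseIdx_eq_take_drop_succ, wordProd_append]

theorem exists_wordProd_eraseIdx_eq_mul_swap {l : List ℕ} (hl : ValidWord n l) {a b : Fin n}
    (hab : a ≠ b) (h : len n (wordProd n l * swap a b) < len n (wordProd n l)) :
    ∃ k < l.length, wordProd n (l.eraseIdx k) = wordProd n l * swap a b := by
  rcases hab.lt_or_gt with hab | hab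
  · exact exists_wordProd_eraseIdx_eq_mul_swap_of_lt hl hab
      (apply_lt_apply_of_len_mul_swap_lt hab h)
  · rw [swap_comm] at h ⊢
    exact exists_wordProd_eraseIdx_eq_mul_swap_of_lt hl hab
      (apply_lt_apply_of_len_mul_swap_lt hab h)

theorem exists_sublist_isReducedWord {l : List ℕ} (hl : ValidWord n l) :
    ∃ t, t.Sublist l ∧ IsReducedWord n (wordProd n l) t := by
  induction l using List.reverseRecOn with
  | nil => exact ⟨[], List.Sublist.slnil, hl, rfl, by simp [wordProd, len_one]⟩
  | append_singleton l c ih =>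
    have hc := hl c (by simp)
    obtain ⟨t, htl, (ht : ValidWord n t), hprod, hlen⟩ :=
      ih (hl.mono (List.sublist_append_left l [c]))
    rw [wordProd_concat]
    rcases len_mul_gen hc (wordProd n l) with hup | hdown
    · exact ⟨t ++ [c], htl.append (List.Sublist.refl _), ht.concat hc,
        by rw [wordProd_concat, hprod], by simp [hup, hlen]⟩
    · obtain ⟨p, q, hpq, hgen⟩ := exists_gen_eq_swap hc
      have hpq' : p ≠ q := by rw [Ne, Fin.ext_iff]; omega
      obtain ⟨k, hk, hk'⟩ := exists_wordProd_eraseIdx_eq_mul_swap ht hpq'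
        (by rw [hprod, ← hgen]; omega)
      refine ⟨t.eraseIdx k,
        ((t.eraseIdx_sublist k).trans htl).trans (List.sublist_append_left l [c]),
        ht.mono (t.eraseIdx_sublist k), by rw [hk', hprod, hgen], ?_⟩
      have := List.length_eraseIdx_add_one hk
      omega

def ReflectionStep (u v : Perm (Fin n)) : Prop :=
  len n u < len n v ∧ ∃ a b : Fin n, a ≠ b ∧ u = v * swap a b

def ChainLE : Perm (Fin n) → Perm (Fin n) → Prop := Relation.ReflTransGen ReflectionStep

theorem ReflectionStep.mul_right {u v : Perm (Fin n)} (h : ReflectionStep u v) (g : Perm (Fin n))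
    (hlen : len n (u * g) < len n (v * g)) : ReflectionStep (u * g) (v * g) := by
  obtain ⟨-, a, b, hab, rfl⟩ := h
  refine ⟨hlen, g⁻¹ a, g⁻¹ b, g⁻¹.injective.ne hab, ?_⟩
  rw [swap_apply_apply, inv_inv]
  group

theorem reflectionStep_mul_gen {w : Perm (Fin n)} {c : ℕ} (h : len n (w * gen n c) < len n w) :
    ReflectionStep (w * gen n c) w := by
  unfold gen at *
  split_ifs at * with hc
  · exact ⟨h, _, _, fun h => by simp only [Fin.ext_iff] at h; omega, rfl⟩
  · simp at h

theorem reflectionStep_mul_gen_of_len_lt {w : Perm (Fin n)} {c : ℕ}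
    (h : len n w < len n (w * gen n c)) : ReflectionStep w (w * gen n c) := by
  simpa only [mul_gen_mul_gen] using
    reflectionStep_mul_gen (w := w * gen n c) (c := c) (by rwa [mul_gen_mul_gen])

theorem ChainLE.exists_sublist {x w : Perm (Fin n)} (h : ChainLE x w) {l : List ℕ}
    (hl : IsReducedWord n w l) : ∃ t, t.Sublist l ∧ IsReducedWord n x t := by
  induction h generalizing l with
  | refl => exact ⟨l, List.Sublist.refl l, hl⟩
  | tail _ hstep ih =>
    obtain ⟨hlt, a, b, hab, rfl⟩ := hstep
    obtain ⟨(hv : ValidWord n l), rfl, -⟩ := hl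
    obtain ⟨k, -, hk⟩ := exists_wordProd_eraseIdx_eq_mul_swap hv hab hlt
    obtain ⟨t₀, ht₀, hred⟩ := exists_sublist_isReducedWord (hv.mono (l.eraseIdx_sublist k))
    rw [hk] at hred
    obtain ⟨t, ht, hx⟩ := ih hred
    exact ⟨t, ht.trans (ht₀.trans (l.eraseIdx_sublist k)), hx⟩

def SubwordProperty (w : Perm (Fin n)) : Prop :=
  ∀ l, IsReducedWord n w l → ∀ t, t.Sublist l → ChainLE (wordProd n t) w

def LiftingProperty (w : Perm (Fin n)) : Prop :=
  ∀ x c, ChainLE x w → len n x < len n (x * gen n c) → len n w < len n (w * gen n c) →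
    ChainLE (x * gen n c) (w * gen n c)

theorem List.sublist_concat_iff {α : Type*} {t l : List α} {c : α} :
    t.Sublist (l ++ [c]) ↔ t.Sublist l ∨ ∃ t₀, t = t₀ ++ [c] ∧ t₀.Sublist l := by
  rw [List.sublist_append_iff]
  constructor
  · rintro ⟨t₀, r, rfl, ht₀, hr⟩
    rcases List.sublist_singleton.1 hr with rfl | rfl
    · exact Or.inl (by simpa using ht₀)
    · exact Or.inr ⟨t₀, rfl, ht₀⟩
  · rintro (ht | ⟨t₀, rfl, ht₀⟩)
    · exact ⟨t, [], by simp, ht, List.nil_sublist _⟩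
    · exact ⟨t₀, [c], rfl, ht₀, List.Sublist.refl _⟩

theorem chainLE_mul_gen_of_len_lt {x y : Perm (Fin n)} {c : ℕ} (hc : 1 ≤ c ∧ c < n)
    (hsub : SubwordProperty (y * gen n c)) (hxy : ChainLE x y)
    (hy : len n (y * gen n c) < len n y) (hx : len n x < len n (x * gen n c)) :
    ChainLE x (y * gen n c) := by
  obtain ⟨l, hv, hprod, hlen⟩ := exists_isReducedWord (y * gen n c)
  have hred : IsReducedWord n y (l ++ [c]) :=
    ⟨ValidWord.concat hv hc, by rw [wordProd_concat, hprod, mul_gen_mul_gen],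
      by rw [List.length_append, List.length_singleton, hlen]
         rcases len_mul_gen hc y with h | h <;> omega⟩
  obtain ⟨t, ht, htv, rfl, htlen⟩ := hxy.exists_sublist hred
  rcases List.sublist_concat_iff.1 ht with ht | ⟨t₀, rfl, ht₀⟩
  · exact hsub l ⟨hv, hprod, hlen⟩ t ht
  · -- a reduced word for `x` ending in `c` would make `x * gen n c` shorter than `x`
    have := len_wordProd_le (ValidWord.mono htv (List.sublist_append_left t₀ [c]))
    rw [wordProd_concat, mul_gen_mul_gen] at hx
    rw [wordProd_concat, List.length_append, List.length_singleton] at htlen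
    omega

theorem subwordProperty_of_forall_len_lt {w : Perm (Fin n)}
    (ih : ∀ v : Perm (Fin n), len n v < len n w → SubwordProperty v ∧ LiftingProperty v) :
    SubwordProperty w := by
  intro l hl t ht
  rcases List.eq_nil_or_concat' l with rfl | ⟨l, c, rfl⟩
  · obtain ⟨-, rfl, -⟩ := hl
    rw [List.sublist_nil.1 ht]
    exact Relation.ReflTransGen.refl
  obtain ⟨hv, rfl, hlen⟩ := hl
  have hvl : ValidWord n l := ValidWord.mono hv (List.sublist_append_left l [c])
  have hc := hv c (by simp)
  have hle := len_wordProd_le hvl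
  rw [wordProd_concat, List.length_append, List.length_singleton] at hlen
  rw [wordProd_concat] at ih ⊢
  set w' := wordProd n l
  have hred : IsReducedWord n w' l :=
    ⟨hvl, rfl, by rcases len_mul_gen hc w' with h | h <;> omega⟩
  have hw' : len n w' < len n (w' * gen n c) := by omega
  have hstep := reflectionStep_mul_gen_of_len_lt hw'
  obtain ⟨hsub, hlift⟩ := ih w' hw'
  rcases List.sublist_concat_iff.1 ht with ht | ⟨t₀, rfl, ht₀⟩
  · exact (hsub l hred t ht).tail hstep
  · rw [wordProd_concat]
    have hx := hsub l hred t₀ ht₀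
    rcases len_mul_gen hc (wordProd n t₀) with h | h
    · exact hlift _ c hx (by omega) hw'
    · exact (Relation.ReflTransGen.single (reflectionStep_mul_gen (by omega))).trans
        (hx.tail hstep)

theorem liftingProperty_of_forall_len_lt {w : Perm (Fin n)}
    (ih : ∀ v : Perm (Fin n), len n v < len n w → SubwordProperty v ∧ LiftingProperty v) :
    LiftingProperty w := by
  intro x c hxw hx hw
  have hc : 1 ≤ c ∧ c < n := by
    by_contra hc
    simp [gen, hc] at hx
  rcases Relation.ReflTransGen.cases_tail hxw with rfl | ⟨y, hxy, hyw⟩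
  · exact Relation.ReflTransGen.refl
  have hlen_yw := hyw.1
  rcases len_mul_gen hc y with hy | hy
  · exact ((ih y hlen_yw).2 x c hxy hx (by omega)).tail (hyw.mul_right _ (by omega))
  · -- descend to `y * gen n c`, lift back to `y`, then climb through `w` to `w * gen n c`
    have hx' := chainLE_mul_gen_of_len_lt hc (ih _ (by omega)).1 hxy (by omega) hx
    have hlift := (ih _ (by omega)).2 x c hx' hx (by rw [mul_gen_mul_gen]; omega)
    rw [mul_gen_mul_gen] at hlift
    exact (hlift.tail hyw).tail (reflectionStep_mul_gen_of_len_lt hw)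

theorem subwordProperty_and_liftingProperty (w : Perm (Fin n)) :
    SubwordProperty w ∧ LiftingProperty w := by
  induction w using (measure (len n)).wf.induction with
  | h w ih => exact ⟨subwordProperty_of_forall_len_lt ih, liftingProperty_of_forall_len_lt ih⟩

def maskWord (l : List ℕ) (S : Finset ℕ) : List ℕ :=
  ((List.range l.length).filter (fun j => decide (j ∈ S))).map (fun j => l.getD j 0)

/-- The statistic `ℓ(π(w^σ)) + |D(σ)|` of the mask `S` on the word `l`. -/
noncomputable def maskWeight (n : ℕ) (l : List ℕ) (S : Finset ℕ) : ℕ :=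
  len n (maskProd n l S) + #(defectSet n l S)

theorem maskProd_eq_wordProd_maskWord (l : List ℕ) (S : Finset ℕ) :
    maskProd n l S = wordProd n (maskWord l S) := rfl

theorem maskWord_concat (l : List ℕ) (a : ℕ) (S : Finset ℕ) :
    maskWord (l ++ [a]) S = maskWord l S ++ if l.length ∈ S then [a] else [] := by
  rw [maskWord, List.length_append, List.length_singleton, List.range_succ, List.filter_append,
    List.map_append, maskWord]
  congr 1
  · refine List.map_congr_left fun j hj => List.getD_append _ _ _ _ ?_
    exact List.mem_range.1 (List.mem_of_mem_filter hj)
  · by_cases h : l.length ∈ S <;> simp [h]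

theorem maskWord_sublist (l : List ℕ) (S : Finset ℕ) : (maskWord l S).Sublist l := by
  induction l using List.reverseRecOn with
  | nil => simp [maskWord]
  | append_singleton l a ih =>
    rw [maskWord_concat]
    refine ih.append ?_
    split_ifs <;> simp

theorem maskProd_concat (l : List ℕ) (a : ℕ) (S : Finset ℕ) :
    maskProd n (l ++ [a]) S = maskProd n l S * if l.length ∈ S then gen n a else 1 := by
  rw [maskProd_eq_wordProd_maskWord, maskWord_concat, wordProd_append]
  split_ifs <;> simp [maskProd_eq_wordProd_maskWord, wordProd]

theorem maskProd_insert_of_length_le (l : List ℕ) (S : Finset ℕ) {m : ℕ}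
    (hm : l.length ≤ m) :
    maskProd n l (insert m S) = maskProd n l S := by
  rw [maskProd, maskProd]
  congr 2
  refine List.filter_congr fun j hj => ?_
  have : j ≠ m := by rw [List.mem_range] at hj; omega
  simp [this]

theorem defectSet_insert_of_length_le (l : List ℕ) (S : Finset ℕ) {m : ℕ}
    (hm : l.length ≤ m) :
    defectSet n l (insert m S) = defectSet n l S := by
  refine filter_congr fun j hj => ?_
  rw [maskProd_insert_of_length_le _ _ (by rw [List.length_take]; omega)]

theorem defectSet_concat (l : List ℕ) (a : ℕ) (S : Finset ℕ) :
    defectSet n (l ++ [a]) S =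
      if len n (maskProd n l S * gen n a) < len n (maskProd n l S)
      then insert l.length (defectSet n l S) else defectSet n l S := by
  have hlast : (l ++ [a]).getD l.length 0 = a := by simp
  rw [defectSet, List.length_append, List.length_singleton, range_add_one, filter_insert,
    List.take_left, hlast]
  have hprefix : ((range l.length).filter fun j =>
      len n (maskProd n ((l ++ [a]).take j) S * gen n ((l ++ [a]).getD j 0)) <
        len n (maskProd n ((l ++ [a]).take j) S)) = defectSet n l S := by
    refine filter_congr fun j hj => ?_
    have hj : j < l.length := mem_range.1 hj
    rw [List.take_append_of_le_length hj.le, List.getD_append _ _ _ _ hj]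
  rw [hprefix]

theorem pow_maskWeight_concat_add {R : Type*} [CommSemiring R] (q : R) {l : List ℕ} {a : ℕ}
    (ha : 1 ≤ a ∧ a < n) {S : Finset ℕ} (hS : S ⊆ range l.length) :
    q ^ maskWeight n (l ++ [a]) S + q ^ maskWeight n (l ++ [a]) (insert l.length S) =
      (1 + q) * q ^ maskWeight n l S := by
  have hlS : l.length ∉ S := fun h => by simpa using hS h
  have hlD : l.length ∉ defectSet n l S := fun h => by simpa using filter_subset _ _ h
  simp only [maskWeight, maskProd_concat, if_neg hlS, if_pos (mem_insert_self _ _),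
    maskProd_insert_of_length_le l S le_rfl, defectSet_concat,
    defectSet_insert_of_length_le l S le_rfl, mul_one]
  rcases len_mul_gen ha (maskProd n l S) with h | h
  · rw [if_neg (by omega), h]
    ring
  · rw [if_pos (by omega), card_insert_of_notMem hlD, ← h]
    ring

theorem sum_pow_maskWeight {R : Type*} [CommSemiring R] (q : R) {l : List ℕ}
    (hl : ValidWord n l) :
    ∑ S ∈ (range l.length).powerset, q ^ maskWeight n l S = (1 + q) ^ l.length := by
  induction l using List.reverseRecOn with
  | nil => simp [maskWeight, maskProd, wordProd, defectSet, len_one]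
  | append_singleton l a ih =>
    rw [List.length_append, List.length_singleton, range_add_one,
      sum_powerset_insert notMem_range_self, ← sum_add_distrib,
      sum_congr rfl fun S hS => pow_maskWeight_concat_add q (hl a (by simp)) (mem_powerset.1 hS),
      ← mul_sum, ih (ValidWord.mono hl (List.sublist_append_left l [a])), pow_succ, mul_comm]

theorem bruhat_maskProd {w : Perm (Fin n)} {l : List ℕ} (hl : IsReducedWord n w l)
    (S : Finset ℕ) : Bruhat n (maskProd n l S) w := by
  intro l' hl'
  obtain ⟨t, ht, -, hprod, -⟩ :=
    ((subwordProperty_and_liftingProperty w).1 l hl _ (maskWord_sublist l S)).exists_sublist hl'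
  exact ⟨t, ht, hprod⟩

theorem defPoly_eq_zero_of_not_bruhat {w x : Perm (Fin n)} {l : List ℕ}
    (hl : IsReducedWord n w l) (hx : ¬Bruhat n x w) : defPoly n l x = 0 :=
  sum_eq_zero fun S _ => if_neg fun (h : maskProd n l S = x) => hx (h ▸ bruhat_maskProd hl S)

theorem sum_pow_len_mul_defPoly (l : List ℕ) :
    ∑ x : Perm (Fin n), (X : ℤ[X]) ^ len n x * defPoly n l x =
      ∑ S ∈ (range l.length).powerset, (X : ℤ[X]) ^ maskWeight n l S := by
  simp only [defPoly, mul_sum, mul_ite, mul_zero, ← pow_add]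
  rw [sum_comm]
  refine sum_congr rfl fun S _ => ?_
  rw [sum_ite_eq _ _ (fun x => (X : ℤ[X]) ^ (len n x + #(defectSet n l S))), if_pos (mem_univ _)]
  rfl

end

open scoped Classical in
/-- `Σ_{x ≤ w} q^{ℓ(x)} P_x(a) = (1+q)^{ℓ(w)}`; equivalently,
`Σ_σ q^{ℓ(π(w^σ)) + |D(σ)|} = (1+q)^r`. -/
theorem stmt7 (n : ℕ) (w : Equiv.Perm (Fin n)) (l : List ℕ) (hl : IsReducedWord n w l) :
    (∑ x : Equiv.Perm (Fin n),
        (if Bruhat n x w then (X : Polynomial ℤ) ^ (len n x) * defPoly n l x else 0))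
      = (1 + X) ^ (len n w) ∧
    (∑ S ∈ (Finset.range l.length).powerset,
        (X : Polynomial ℤ) ^ (len n (maskProd n l S) + (defectSet n l S).card))
      = (1 + X) ^ l.length := by
  have hsum := sum_pow_maskWeight (X : ℤ[X]) hl.1
  refine ⟨?_, hsum⟩
  rw [← hl.2.2, ← hsum, ← sum_pow_len_mul_defPoly]
  refine sum_congr rfl fun x _ => ite_eq_left_iff.2 fun hx => ?_
  rw [defPoly_eq_zero_of_not_bruhat hl hx, mul_zero]
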